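/- arXiv:2510.16959 — 2 statements merged into one kernel-verified Lean document; each statement's English description precedes it below -/
import Mathlib

section
/- Fix σ > 0, positive integers r, s, d, and a vector v ∈ ℤ^d. Let D denote the distribution on ℤ of a discrete Gaussian N_ℤ(σ²) sample conditioned on having absolute value strictly less than r. Consider two distributions on ℤ^d: (A) sample ω uniformly from {r, 2r, ..., sr} and η₁, ..., η_d i.i.d. from D, and output (⌊v_i + ω + η_i⌋_{rs})_{i=1}^d; (B) sample ω uniformly from {r, 2r, ..., sr}, and for each i independently: if ⌊v_i + ω − r⌋_{rs} = ⌊v_i + ω + r⌋_{rs}, set y_i = ⌊v_i + ω⌋_{rs}; otherwise sample η_i from D and set y_i = ⌊v_i + ω + η_i⌋_{rs}; output (y₁, ..., y_d). Then distributions (A) and (B) are equal. -/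
open scoped ENNReal

/-- `rdown k z` rounds the integer `z` down to the nearest multiple of `k`. -/
def rdown (k : ℕ) (z : ℤ) : ℤ := z - z % (k : ℤ)

lemma rdown_eq_mul (k : ℕ) (z : ℤ) : rdown k z = (k : ℤ) * (z / k) := by
  simp [rdown, Int.emod_def]

lemma rdown_mono {k : ℕ} (hk : 0 < k) {a b : ℤ} (h : a ≤ b) : rdown k a ≤ rdown k b := by
  rw [rdown_eq_mul, rdown_eq_mul]
  exact mul_le_mul_of_nonneg_left (Int.ediv_le_ediv (by exact_mod_cast hk) h) (by positivity)

/-- With `D` the discrete Gaussian `N_ℤ(σ²)` conditioned on `|·| < r`, the distribution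
(A): sample `ω` uniform on `{r, 2r, …, sr}` and `η₁, …, η_d` i.i.d. from `D`, output
`(⌊v_i + ω + η_i⌋_{rs})_i`, coincides with the distribution (B): sample `ω` uniform on
`{r, 2r, …, sr}` and, for each `i` independently, output `⌊v_i + ω⌋_{rs}` if
`⌊v_i + ω − r⌋_{rs} = ⌊v_i + ω + r⌋_{rs}`, and otherwise `⌊v_i + ω + η_i⌋_{rs}` with
`η_i ∼ D`. -/
theorem stmt7 (σ : ℝ) (hσ : 0 < σ) (r s d : ℕ) (hr : 0 < r) (hs : 0 < s) (hd : 0 < d)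
    (v : Fin d → ℤ)
    (G : PMF ℤ)
    (hG : ∀ x : ℤ, G x = ENNReal.ofReal
      (Real.exp (-(x : ℝ) ^ 2 / (2 * σ ^ 2)) /
        ∑' y : ℤ, Real.exp (-(y : ℝ) ^ 2 / (2 * σ ^ 2))))
    (D : PMF ℤ)
    (hD : ∀ η : ℤ, D η =
      (if |η| < (r : ℤ) then G η else 0) / G.toOuterMeasure {z : ℤ | |z| < (r : ℤ)})
    (A B : PMF (Fin d → ℤ))
    (hA : ∀ y : Fin d → ℤ, A y = (s : ℝ≥0∞)⁻¹ * ∑ j ∈ Finset.Icc 1 s, ∏ i,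
      ∑' η : ℤ, if rdown (r * s) (v i + (j : ℤ) * (r : ℤ) + η) = y i then D η else 0)
    (hB : ∀ y : Fin d → ℤ, B y = (s : ℝ≥0∞)⁻¹ * ∑ j ∈ Finset.Icc 1 s, ∏ i,
      if rdown (r * s) (v i + (j : ℤ) * (r : ℤ) - (r : ℤ)) =
          rdown (r * s) (v i + (j : ℤ) * (r : ℤ) + (r : ℤ)) then
        (if y i = rdown (r * s) (v i + (j : ℤ) * (r : ℤ)) then 1 else 0)
      else
        ∑' η : ℤ, if rdown (r * s) (v i + (j : ℤ) * (r : ℤ) + η) = y i then D η else 0) :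
    A = B := by
  have hDzero : ∀ η : ℤ, ¬ |η| < (r : ℤ) → D η = 0 := by
    intro η hη
    rw [hD, if_neg hη, ENNReal.zero_div]
  ext y
  rw [hA, hB]
  congr 1
  refine Finset.sum_congr rfl fun j _ => Finset.prod_congr rfl fun i _ => ?_
  set w : ℤ := v i + (j : ℤ) * (r : ℤ) with hw
  by_cases h : rdown (r * s) (w - (r : ℤ)) = rdown (r * s) (w + (r : ℤ))
  · rw [if_pos h]
    -- sandwich: for |η| < r, rdown (r*s) (w + η) = rdown (r*s) w
    have hsand : ∀ η : ℤ, |η| < (r : ℤ) → rdown (r * s) (w + η) = rdown (r * s) w := by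
      intro η hη
      obtain ⟨h1, h2⟩ := abs_lt.mp hη
      have e1 : rdown (r * s) (w - r) ≤ rdown (r * s) (w + η) := rdown_mono (by positivity) (by linarith)
      have e2 : rdown (r * s) (w + η) ≤ rdown (r * s) (w + r) := rdown_mono (by positivity) (by linarith)
      have e3 : rdown (r * s) (w - r) ≤ rdown (r * s) w := rdown_mono (by positivity) (by linarith)
      have e4 : rdown (r * s) w ≤ rdown (r * s) (w + r) := rdown_mono (by positivity) (by linarith)
      omega
    calc (∑' η : ℤ, if rdown (r * s) (w + η) = y i then D η else 0)
        = ∑' η : ℤ, if rdown (r * s) w = y i then D η else 0 := by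
          refine tsum_congr fun η => ?_
          by_cases hη : |η| < (r : ℤ)
          · rw [hsand η hη]
          · simp [hDzero η hη]
      _ = if y i = rdown (r * s) w then 1 else 0 := by
          by_cases hc : rdown (r * s) w = y i
          · simp [hc, D.tsum_coe]
          · simp [hc, Ne.symm hc]
  · rw [if_neg h]
end

section
/- Let d ≥ 1 be an integer, ε > 0, and let m and s be positive integers. The mechanism M : ({0,1}^d)^* → ℤ^d that samples ω uniformly from {m, 2m, ..., sm}, samples η₁, ..., η_d independently from the discrete Laplace distribution Lap_ℤ(d/ε), and outputs (⌊sum(x)_i + ω + η_i⌋_{ms})_{i=1}^d, is (ε, 0)-differentially private with respect to insert-delete adjacency. -/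
/-! Each Laplace coordinate changes its likelihood by a factor of at most `e^{ε/d}` when its
centre moves by one, and adding or deleting a row moves every coordinate of `sum(x)` by at
most one. The shift `ω` and the rounding act after the noise, on every database alike, so the
bound survives them and the product over the `d` coordinates gives `e^ε`. -/

open scoped ENNReal

/-- Insert-delete adjacency on databases: `x'` is obtained from `x` by inserting or
deleting exactly one entry. -/
def Adjacent {α : Type*} (x x' : List α) : Prop :=
  (∃ a l₁ l₂, x = l₁ ++ l₂ ∧ x' = l₁ ++ a :: l₂) ∨
  (∃ a l₁ l₂, x' = l₁ ++ l₂ ∧ x = l₁ ++ a :: l₂)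

/-- The coordinatewise sum of the entries of a database `x ∈ ({0,1}^d)^*`. -/
def dbSum {d : ℕ} (x : List (Fin d → Bool)) (i : Fin d) : ℤ :=
  (x.map fun row => if row i then (1 : ℤ) else 0).sum

/-- `(ε, δ)`-differential privacy of a mechanism `M` with respect to an adjacency
relation `Adj`. -/
def IsDP {X : Type*} {Y : Type*} (Adj : X → X → Prop) (M : X → PMF Y) (ε δ : ℝ) : Prop :=
  ∀ x x', Adj x x' → ∀ S : Set Y,
    (M x).toOuterMeasure S ≤
      ENNReal.ofReal (Real.exp ε) * (M x').toOuterMeasure S + ENNReal.ofReal δ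

lemma discreteLaplace_le_exp_mul {t : ℝ} (ht : 0 ≤ t) {L : ℤ → ℝ≥0∞}
    (hL : ∀ x : ℤ, L x = ENNReal.ofReal
      ((Real.exp (1 / t) - 1) / (Real.exp (1 / t) + 1) * Real.exp (-|(x : ℝ)| / t)))
    {a b : ℤ} (hab : |a - b| ≤ 1) :
    L a ≤ ENNReal.ofReal (Real.exp (1 / t)) * L b := by
  rw [hL a, hL b, ← ENNReal.ofReal_mul (Real.exp_nonneg _)]
  apply ENNReal.ofReal_le_ofReal
  have hC : 0 ≤ (Real.exp (1 / t) - 1) / (Real.exp (1 / t) + 1) := by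
    have : 1 ≤ Real.exp (1 / t) := Real.one_le_exp (by positivity)
    apply div_nonneg <;> linarith
  have hab' : |(b : ℝ)| ≤ |(a : ℝ)| + 1 := by
    have hab_real : |(a : ℝ) - b| ≤ 1 := by exact_mod_cast hab
    have := abs_sub_abs_le_abs_sub (b : ℝ) a
    rw [abs_sub_comm] at this
    linarith
  have hexp : Real.exp (-|(a : ℝ)| / t) ≤ Real.exp (1 / t) * Real.exp (-|(b : ℝ)| / t) := by
    rw [← Real.exp_add, Real.exp_le_exp, ← add_div]
    gcongr
    linarith
  calc _ ≤ _ * (Real.exp (1 / t) * Real.exp (-|(b : ℝ)| / t)) :=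
        mul_le_mul_of_nonneg_left hexp hC
    _ = _ := by ring

section ShiftedNoise

variable {L : ℤ → ℝ≥0∞} {E : ℝ≥0∞}

lemma tsum_ite_add_le_mul (hL : ∀ a b : ℤ, |a - b| ≤ 1 → L a ≤ E * L b)
    (P : ℤ → Prop) [DecidablePred P] {c c' : ℤ} (hc : |c - c'| ≤ 1) :
    ∑' η, (if P (c + η) then L η else 0) ≤ E * ∑' η, if P (c' + η) then L η else 0 := by
  rw [← (Equiv.addRight (c' - c)).tsum_eq, ← ENNReal.tsum_mul_left]
  refine ENNReal.tsum_le_tsum fun η => ?_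
  simp only [Equiv.coe_addRight, show c + (η + (c' - c)) = c' + η by ring]
  split_ifs
  · exact hL _ _ (by rwa [show η + (c' - c) - η = -(c - c') by ring, abs_neg])
  · simp

lemma prod_tsum_ite_add_le_pow_mul {d : ℕ} (hL : ∀ a b : ℤ, |a - b| ≤ 1 → L a ≤ E * L b)
    (f : ℤ → ℤ) {c c' : Fin d → ℤ} (hc : ∀ i, |c i - c' i| ≤ 1) (y : Fin d → ℤ) :
    ∏ i, ∑' η, (if f (c i + η) = y i then L η else 0) ≤
      E ^ d * ∏ i, ∑' η, if f (c' i + η) = y i then L η else 0 := by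
  calc _ ≤ ∏ i, E * ∑' η, (if f (c' i + η) = y i then L η else 0) :=
        Finset.prod_le_prod' fun i _ => tsum_ite_add_le_mul hL (f · = y i) (hc i)
    _ = _ := by
      rw [Finset.prod_mul_distrib, Finset.prod_const, Finset.card_univ, Fintype.card_fin]

lemma mixture_prod_tsum_ite_add_le_pow_mul {d : ℕ}
    (hL : ∀ a b : ℤ, |a - b| ≤ 1 → L a ≤ E * L b) (f : ℤ → ℤ) (w : ℝ≥0∞) (J : Finset ℕ)
    (ω : ℕ → ℤ) {c c' : Fin d → ℤ} (hc : ∀ i, |c i - c' i| ≤ 1) (y : Fin d → ℤ) :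
    w * ∑ j ∈ J, ∏ i, ∑' η, (if f (c i + ω j + η) = y i then L η else 0) ≤
      E ^ d * (w * ∑ j ∈ J, ∏ i, ∑' η, if f (c' i + ω j + η) = y i then L η else 0) := by
  rw [mul_left_comm, Finset.mul_sum (a := E ^ d)]
  gcongr with j
  exact prod_tsum_ite_add_le_pow_mul hL f (c := (c · + ω j)) (c' := (c' · + ω j))
    (fun i => by simpa using hc i) y

end ShiftedNoise

lemma dbSum_append_cons {d : ℕ} (a : Fin d → Bool) (l₁ l₂ : List (Fin d → Bool)) (i : Fin d) :
    dbSum (l₁ ++ a :: l₂) i = dbSum (l₁ ++ l₂) i + if a i then 1 else 0 := by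
  simp only [dbSum, List.map_append, List.sum_append, List.map_cons, List.sum_cons]
  ring

lemma Adjacent.abs_dbSum_sub_le_one {d : ℕ} {x x' : List (Fin d → Bool)} (h : Adjacent x x')
    (i : Fin d) : |dbSum x i - dbSum x' i| ≤ 1 := by
  rcases h with ⟨a, l₁, l₂, rfl, rfl⟩ | ⟨a, l₁, l₂, rfl, rfl⟩ <;>
    rw [dbSum_append_cons] <;> split_ifs <;> norm_num

lemma isDP_zero_of_le_mul {X Y : Type*} {Adj : X → X → Prop} {M : X → PMF Y} {ε : ℝ}
    (h : ∀ x x', Adj x x' → ∀ y, M x y ≤ ENNReal.ofReal (Real.exp ε) * M x' y) :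
    IsDP Adj M ε 0 := by
  intro x x' hadj S
  rw [PMF.toOuterMeasure_apply, PMF.toOuterMeasure_apply, ENNReal.ofReal_zero, add_zero,
    ← ENNReal.tsum_mul_left]
  refine ENNReal.tsum_le_tsum fun y => ?_
  rw [← Set.indicator_mul_right (f := fun _ => ENNReal.ofReal (Real.exp ε))]
  exact Set.indicator_le_indicator (h x x' hadj y)

theorem stmt12_general (d : ℕ) (hd : 1 ≤ d) (ε : ℝ) (hε : 0 < ε) (m s : ℕ)
    (L : PMF ℤ)
    (hL : ∀ x : ℤ, L x = ENNReal.ofReal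
      ((Real.exp (1 / ((d : ℝ) / ε)) - 1) / (Real.exp (1 / ((d : ℝ) / ε)) + 1) *
        Real.exp (-|(x : ℝ)| / ((d : ℝ) / ε))))
    (M : List (Fin d → Bool) → PMF (Fin d → ℤ))
    (hM : ∀ x y, M x y = (s : ℝ≥0∞)⁻¹ * ∑ j ∈ Finset.Icc 1 s, ∏ i,
      ∑' η : ℤ,
        if rdown (m * s) (dbSum x i + (j : ℤ) * (m : ℤ) + η) = y i then L η else 0) :
    IsDP Adjacent M ε 0 := by
  have hLstep : ∀ a b : ℤ, |a - b| ≤ 1 →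
      L a ≤ ENNReal.ofReal (Real.exp (1 / ((d : ℝ) / ε))) * L b :=
    fun a b => discreteLaplace_le_exp_mul (by positivity) hL
  have hpow :
      ENNReal.ofReal (Real.exp (1 / ((d : ℝ) / ε))) ^ d = ENNReal.ofReal (Real.exp ε) := by
    have : (d : ℝ) ≠ 0 := by positivity
    rw [← ENNReal.ofReal_pow (Real.exp_nonneg _), ← Real.exp_nat_mul, one_div_div,
      mul_div_cancel₀ _ this]
  refine isDP_zero_of_le_mul fun x x' hadj y => ?_
  rw [hM, hM, ← hpow]
  exact mixture_prod_tsum_ite_add_le_pow_mul hLstep (rdown (m * s)) _ _ (fun j => (j : ℤ) * m)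
    hadj.abs_dbSum_sub_le_one y

/-- The randomized-shift-and-round discrete Laplace mechanism (Mechanism 2): sample
`ω` uniform on `{m, 2m, …, sm}`, sample `η₁, …, η_d` i.i.d. `Lap_ℤ(d/ε)`, and output
`(⌊sum(x)_i + ω + η_i⌋_{ms})_i`. It is `(ε, 0)`-DP with respect to insert-delete
adjacency. -/
theorem stmt12 (d : ℕ) (hd : 1 ≤ d) (ε : ℝ) (hε : 0 < ε) (m s : ℕ)
    (hm : 0 < m) (hs : 0 < s)
    (L : PMF ℤ)
    (hL : ∀ x : ℤ, L x = ENNReal.ofReal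
      ((Real.exp (1 / ((d : ℝ) / ε)) - 1) / (Real.exp (1 / ((d : ℝ) / ε)) + 1) *
        Real.exp (-|(x : ℝ)| / ((d : ℝ) / ε))))
    (M : List (Fin d → Bool) → PMF (Fin d → ℤ))
    (hM : ∀ x y, M x y = (s : ℝ≥0∞)⁻¹ * ∑ j ∈ Finset.Icc 1 s, ∏ i,
      ∑' η : ℤ,
        if rdown (m * s) (dbSum x i + (j : ℤ) * (m : ℤ) + η) = y i then L η else 0) :
    IsDP Adjacent M ε 0 :=
  stmt12_general d hd ε hε m s L hL M hM
end
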